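/- arXiv:2008.09938 — 8 statements merged into one kernel-verified Lean document; each statement's English description precedes it below -/
import Mathlib

section
/- For every α>0, p∈[0,1], ε∈(0,1), and integers n,m≥0, the following integral identity holds: ∫_0^1 αβ^{α-1}[ p(1-β)^n β^m + (1-p)(1-εβ)^n (εβ)^m ] dβ = α B(n+1, m+α) [ p + (1-p) I_ε(m+α, n+1)/ε^α ]. -/
open MeasureTheory

/-- The Beta function `B(a,b) = ∫_0^1 x^(a-1) (1-x)^(b-1) dx`. -/
noncomputable def betaFun (a b : ℝ) : ℝ :=
  ∫ x in (0:ℝ)..1, x ^ (a - 1) * (1 - x) ^ (b - 1)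

/-- The regularized incomplete Beta function
`I_ε(a,b) = (1/B(a,b)) ∫_0^ε x^(a-1) (1-x)^(b-1) dx`. -/
noncomputable def incBeta (ε a b : ℝ) : ℝ :=
  (∫ x in (0:ℝ)..ε, x ^ (a - 1) * (1 - x) ^ (b - 1)) / betaFun a b

/-!
Write `a = m + α`. On `(0,1]` the integrand is
`p α β^(a-1) (1-β)^n + (1-p) α ε^m β^(a-1) (1-εβ)^n`. The first term integrates to
`p α B(a, n+1)`, and the substitution `x = εβ` turns the second integral into
`ε^(-a) ∫_0^ε x^(a-1) (1-x)^n dx = ε^(-a) B(a, n+1) I_ε(a, n+1)`;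
finally `ε^m ε^(-a) = ε^(-α)` and `B` is symmetric.
-/

lemma betaFun_comm (a b : ℝ) : betaFun a b = betaFun b a := by
  have h := intervalIntegral.integral_comp_sub_left (a := 0) (b := 1)
    (fun x : ℝ => x ^ (b - 1) * (1 - x) ^ (a - 1)) 1
  simp only [sub_sub_cancel, sub_zero, sub_self] at h
  rw [betaFun, betaFun, ← h]
  exact intervalIntegral.integral_congr fun x _ => mul_comm _ _

lemma betaFun_natCast_add_one (a : ℝ) (n : ℕ) :
    betaFun a (n + 1) = ∫ x in (0:ℝ)..1, x ^ (a - 1) * (1 - x) ^ n := by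
  simp only [betaFun, add_sub_cancel_right, Real.rpow_natCast]

lemma incBeta_natCast_add_one (c a : ℝ) (n : ℕ) :
    incBeta c a (n + 1) = (∫ x in (0:ℝ)..c, x ^ (a - 1) * (1 - x) ^ n) / betaFun a (n + 1) := by
  simp only [incBeta, add_sub_cancel_right, Real.rpow_natCast]

lemma intervalIntegrable_rpow_sub_one_mul_pow {a : ℝ} (ha : 0 < a) (c : ℝ) (n : ℕ) :
    IntervalIntegrable (fun x => x ^ (a - 1) * (1 - c * x) ^ n) volume 0 1 :=
  (intervalIntegral.intervalIntegrable_rpow' (by linarith)).mul_continuousOn (by fun_prop)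

lemma betaFun_natCast_add_one_pos {a : ℝ} (ha : 0 < a) (n : ℕ) : 0 < betaFun a (n + 1) := by
  rw [betaFun_natCast_add_one]
  refine intervalIntegral.intervalIntegral_pos_of_pos_on
    (by simpa using intervalIntegrable_rpow_sub_one_mul_pow ha 1 n) (fun x hx => ?_) one_pos
  have h1x : 0 < 1 - x := by linarith [hx.2]
  have := Real.rpow_pos_of_pos hx.1 (a - 1)
  positivity

lemma integral_rpow_sub_one_mul_comp_mul_left {c : ℝ} (hc : 0 < c) (a : ℝ) (g : ℝ → ℝ) :
    ∫ x in (0:ℝ)..1, x ^ (a - 1) * g (c * x) =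
      (∫ x in (0:ℝ)..c, x ^ (a - 1) * g x) / c ^ a := by
  have h := intervalIntegral.integral_comp_mul_left (a := 0) (b := 1)
    (fun x => x ^ (a - 1) * g x) hc.ne'
  simp only [mul_zero, mul_one, smul_eq_mul] at h
  have hscale : ∫ x in (0:ℝ)..1, (c * x) ^ (a - 1) * g (c * x)
      = c ^ (a - 1) * ∫ x in (0:ℝ)..1, x ^ (a - 1) * g (c * x) := by
    rw [← intervalIntegral.integral_const_mul]
    refine intervalIntegral.integral_congr fun x hx => ?_
    rw [Set.uIcc_of_le zero_le_one] at hx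
    rw [Real.mul_rpow hc.le hx.1, mul_assoc]
  rw [hscale, Real.rpow_sub_one hc.ne'] at h
  have hca : c ^ a ≠ 0 := (Real.rpow_pos_of_pos hc a).ne'
  field_simp at h ⊢
  linarith

theorem stmt0_general (α p ε : ℝ) (hα : 0 < α)
    (hε : ε ∈ Set.Ioo (0:ℝ) 1) (n m : ℕ) :
    (∫ β in (0:ℝ)..1, α * β ^ (α - 1) *
        (p * (1 - β) ^ n * β ^ m + (1 - p) * (1 - ε * β) ^ n * (ε * β) ^ m))
      = α * betaFun ((n : ℝ) + 1) ((m : ℝ) + α) *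
          (p + (1 - p) * incBeta ε ((m : ℝ) + α) ((n : ℝ) + 1) / ε ^ α) := by
  set a : ℝ := m + α with ha_def
  have ha : 0 < a := by positivity
  have hε0 : 0 < ε := hε.1
  have hsplit : (∫ β in (0:ℝ)..1, α * β ^ (α - 1) *
        (p * (1 - β) ^ n * β ^ m + (1 - p) * (1 - ε * β) ^ n * (ε * β) ^ m))
      = ∫ β in (0:ℝ)..1, p * α * (β ^ (a - 1) * (1 - β) ^ n)
          + (1 - p) * α * ε ^ m * (β ^ (a - 1) * (1 - ε * β) ^ n) := by
    refine intervalIntegral.integral_congr_ae (Filter.Eventually.of_forall fun β hβ => ?_)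
    rw [Set.uIoc_of_le zero_le_one] at hβ
    have hpow : β ^ (α - 1) * β ^ m = β ^ (a - 1) := by
      rw [← Real.rpow_natCast, ← Real.rpow_add hβ.1, ha_def]
      ring_nf
    rw [mul_pow, ← hpow]
    ring
  have hsub := integral_rpow_sub_one_mul_comp_mul_left hε0 a (fun x => (1 - x) ^ n)
  have hεa : ε ^ a = ε ^ m * ε ^ α := by
    rw [ha_def, Real.rpow_add hε0, Real.rpow_natCast]
  have hB := betaFun_natCast_add_one_pos ha n
  have hεα := Real.rpow_pos_of_pos hε0 α
  have hint₁ : IntervalIntegrable (fun x => x ^ (a - 1) * (1 - x) ^ n) volume 0 1 := by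
    simpa using intervalIntegrable_rpow_sub_one_mul_pow ha 1 n
  have hint₂ := intervalIntegrable_rpow_sub_one_mul_pow ha ε n
  rw [hsplit, intervalIntegral.integral_add (hint₁.const_mul _) (hint₂.const_mul _),
    intervalIntegral.integral_const_mul, intervalIntegral.integral_const_mul, hsub, hεa,
    betaFun_comm, ← betaFun_natCast_add_one, incBeta_natCast_add_one]
  field_simp

theorem stmt0 (α p ε : ℝ) (hα : 0 < α) (hp0 : 0 ≤ p) (hp1 : p ≤ 1)
    (hε : ε ∈ Set.Ioo (0:ℝ) 1) (n m : ℕ) :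
    (∫ β in (0:ℝ)..1, α * β ^ (α - 1) *
        (p * (1 - β) ^ n * β ^ m + (1 - p) * (1 - ε * β) ^ n * (ε * β) ^ m))
      = α * betaFun ((n : ℝ) + 1) ((m : ℝ) + α) *
          (p + (1 - p) * incBeta ε ((m : ℝ) + α) ((n : ℝ) + 1) / ε ^ α) :=
  stmt0_general α p ε hα hε n m
end

section
/- For every integer n≥1, the function Pr_{0,n} is a probability mass function on the set of all set partitions of {1,…,n}: it is nonnegative and Σ_𝒜 Pr_{0,n}(𝒜) = 1, where the sum ranges over all set partitions 𝒜 of {1,…,n}. -/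
open MeasureTheory

/-- `P` is a set partition of `{1,…,n}` (modelled as `Fin n`): the blocks are non-empty and
every point lies in exactly one block. -/
def IsSetPartition (n : ℕ) (P : Finset (Finset (Fin n))) : Prop :=
  (∅ ∉ P) ∧ ∀ i : Fin n, ∃! A : Finset (Fin n), A ∈ P ∧ i ∈ A

/-- The type of set partitions of `{1,…,n}`. -/
def SetPartition (n : ℕ) := {P : Finset (Finset (Fin n)) // IsSetPartition n P}

noncomputable instance (n : ℕ) : Fintype (SetPartition n) := by
  unfold SetPartition; exact Fintype.ofFinite _

/-- An enumeration of the blocks of a finite family of blocks by `Fin t`, `t` the number of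
blocks. -/
noncomputable def blockEnum {n : ℕ} (P : Finset (Finset (Fin n))) :
    Fin P.card → Finset (Fin n) :=
  fun j => ((Fintype.equivFinOfCardEq (Fintype.card_coe P)).symm j : Finset (Fin n))

/-- The sizes `n_1, …, n_t` of the blocks of a set partition `P` with `t = P.1.card` blocks. -/
noncomputable def blockSize {n : ℕ} (P : SetPartition n) : Fin P.1.card → ℕ :=
  fun j => (blockEnum P.1 j).card

/-- The exchangeable partition probability function of the quasi-Bernoulli stick-breaking
process with parameters `α`, `p`, `ε ∈ (0,1)`, evaluated on a partition of `n` points into `t`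
blocks of sizes `ns 1, …, ns t`:
`(α^t Γ(α)/Γ(n+α)) (∏_j n_j!) Σ_{σ∈S_t} ∏_j [p+(1-p) I_ε(g_{j+1}(σ)+α, n_{σ_j}+1)/ε^α]
  / [g_j(σ)+α(1-p)(1-ε^{g_j(σ)})]` where `g_j(σ) = Σ_{l=j}^t n_{σ_l}`. -/
noncomputable def eppfEps (α p ε : ℝ) (n t : ℕ) (ns : Fin t → ℕ) : ℝ :=
  α ^ t * Real.Gamma α / Real.Gamma ((n : ℝ) + α) *
    (∏ j, (Nat.factorial (ns j) : ℝ)) *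
    ∑ σ : Equiv.Perm (Fin t), ∏ j,
      (p + (1 - p) *
          incBeta ε (((∑ l ∈ Finset.Ioi j, ns (σ l) : ℕ) : ℝ) + α) ((ns (σ j) : ℝ) + 1)
          / ε ^ α) /
      (((∑ l ∈ Finset.Ici j, ns (σ l) : ℕ) : ℝ) +
        α * (1 - p) * (1 - ε ^ (∑ l ∈ Finset.Ici j, ns (σ l))))

/-- The exchangeable partition probability function of the quasi-Bernoulli stick-breaking
process with `ε = 0` (a finite stick-breaking model with `Geometric(1-p)` number of
components and `Beta(1,α)` proportions):
`(α^t Γ(α)/Γ(n+α)) (∏_j n_j!) Σ_{σ∈S_t} ∏_j [p + 𝟙(j=t)(1-p)/(α B(α, n_{σ_t}+1))]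
  / [g_j(σ)+α(1-p)]` where `g_j(σ) = Σ_{l=j}^t n_{σ_l}`. -/
noncomputable def eppfZero (α p : ℝ) (n t : ℕ) (ns : Fin t → ℕ) : ℝ :=
  α ^ t * Real.Gamma α / Real.Gamma ((n : ℝ) + α) *
    (∏ j, (Nat.factorial (ns j) : ℝ)) *
    ∑ σ : Equiv.Perm (Fin t), ∏ j : Fin t,
      (p + (if j.val = t - 1 then
              (1 - p) / (α * betaFun α ((ns (σ j) : ℝ) + 1)) else 0)) /
      (((∑ l ∈ Finset.Ici j, ns (σ l) : ℕ) : ℝ) + α * (1 - p))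

/-- `Pr_{ε,n}(𝒜)` for a set partition `𝒜` of `{1,…,n}` and `ε ∈ (0,1)`. -/
noncomputable def PrEps (α p ε : ℝ) (n : ℕ) (P : SetPartition n) : ℝ :=
  eppfEps α p ε n P.1.card (blockSize P)

/-- `Pr_{0,n}(𝒜)` for a set partition `𝒜` of `{1,…,n}`. -/
noncomputable def PrZero (α p : ℝ) (n : ℕ) (P : SetPartition n) : ℝ :=
  eppfZero α p n P.1.card (blockSize P)

/-!
Summing `Pr_{0,n}` over the partitions and, inside, over the orderings `σ` of their blocks
amounts to summing over ordered set partitions `(B_1, …, B_t)` of `{1,…,n}` the weights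
`Γ(α)/Γ(n+α) · ∏_j w(|B_j|, |B_j| + ⋯ + |B_t|)`. Splitting off the first block shows that
the total weight `T(s)` of the ordered partitions of a finite set `s` only depends on `N = |s|`
and satisfies `T(N) = Σ_{k ≥ 1} C(N,k) w(k,N) T(N-k)`. The rising factorial `(α)_N` solves this
recursion: using `α B(α, k+1) = k!/(α+1)_k`, this is the identity
`Σ_k C(N,k) k! (α)_{N-k} = (α+1)_N`. Hence the total mass is `Γ(α)/Γ(n+α) · (α)_n = 1`.
-/

open Finset Function Polynomial
open scoped Nat

theorem ascPochhammer_succ_eval_eq_mul {S : Type*} [CommSemiring S] (x : S) (n : ℕ) :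
    (ascPochhammer S (n + 1)).eval x = x * (ascPochhammer S n).eval (x + 1) := by
  simp [ascPochhammer_succ_left, eval_comp]

theorem sum_ascPochhammer_eval_div_factorial {K : Type*} [Field K] [CharZero K] (x : K) (n : ℕ) :
    ∑ k ∈ range (n + 1), (ascPochhammer K k).eval x / k ! =
      (ascPochhammer K n).eval (x + 1) / n ! := by
  induction n with
  | zero => simp
  | succ n ih =>
    rw [sum_range_succ, ih, ascPochhammer_succ_eval_eq_mul, ascPochhammer_succ_eval,
      Nat.factorial_succ]
    push_cast
    field_simp
    ring

theorem sum_choose_mul_factorial_mul_ascPochhammer_eval {K : Type*} [Field K] [CharZero K]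
    (x : K) (n : ℕ) :
    ∑ k ∈ range (n + 1), (n.choose k : K) * k ! * (ascPochhammer K (n - k)).eval x =
      (ascPochhammer K n).eval (x + 1) := by
  have hn : (n ! : K) ≠ 0 := Nat.cast_ne_zero.mpr n.factorial_ne_zero
  rw [← sum_range_reflect, ← mul_div_cancel_left₀ ((ascPochhammer K n).eval (x + 1)) hn,
    mul_div_assoc, ← sum_ascPochhammer_eval_div_factorial, mul_sum]
  refine sum_congr rfl fun k hk => ?_
  have hkn : k ≤ n := Nat.lt_succ_iff.mp (mem_range.mp hk)
  have hk : (k ! : K) ≠ 0 := Nat.cast_ne_zero.mpr k.factorial_ne_zero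
  rw [Nat.add_sub_cancel, Nat.sub_sub_self hkn, Nat.choose_symm hkn]
  have h : (n.choose k * k ! * (n - k)! : K) = n ! := by
    exact_mod_cast Nat.choose_mul_factorial_mul_factorial hkn
  field_simp
  linear_combination (ascPochhammer K k).eval x * h

theorem Real.Gamma_natCast_add {x : ℝ} (hx : 0 < x) (n : ℕ) :
    Real.Gamma (n + x) = (ascPochhammer ℝ n).eval x * Real.Gamma x := by
  induction n with
  | zero => simp
  | succ n ih =>
    rw [Nat.cast_succ, add_right_comm, Real.Gamma_add_one (by positivity), ih,
      ascPochhammer_succ_eval]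
    ring

theorem betaFun_eq_beta {a b : ℝ} (ha : 0 < a) (hb : 0 < b) :
    betaFun a b = ProbabilityTheory.beta a b := by
  rw [ProbabilityTheory.beta_eq_betaIntegralReal a b ha hb, Complex.betaIntegral, betaFun,
    ← Complex.ofReal_re (∫ x in (0:ℝ)..1, _), ← intervalIntegral.integral_ofReal]
  congr 1
  refine intervalIntegral.integral_congr fun x hx => ?_
  rw [Set.uIcc_of_le zero_le_one] at hx
  push_cast
  rw [Complex.ofReal_cpow hx.1, Complex.ofReal_cpow (sub_nonneg.mpr hx.2)]
  push_cast
  rfl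

theorem mul_betaFun_natCast_add_one {α : ℝ} (hα : 0 < α) (m : ℕ) :
    α * betaFun α (m + 1) = m ! / (ascPochhammer ℝ m).eval (α + 1) := by
  have hΓ : Real.Gamma (α + (m + 1)) = α * (ascPochhammer ℝ m).eval (α + 1) * Real.Gamma α := by
    rw [← ascPochhammer_succ_eval_eq_mul, ← Real.Gamma_natCast_add hα]
    push_cast
    ring_nf
  have hpos : 0 < (ascPochhammer ℝ m).eval (α + 1) := ascPochhammer_pos m _ (by linarith)
  rw [betaFun_eq_beta hα (by positivity), ProbabilityTheory.beta, hΓ,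
    Real.Gamma_nat_eq_factorial]
  field_simp [(Real.Gamma_pos_of_pos hα).ne']

theorem image_univ_coe_equiv {α : Type*} [DecidableEq α] {P : Finset α} {t : ℕ}
    (e : Fin t ≃ P) : univ.image (fun j => (e j : α)) = P := by
  ext B
  simp only [mem_image, mem_univ, true_and]
  exact ⟨fun ⟨j, hj⟩ => hj ▸ (e j).2, fun hB => ⟨e.symm ⟨B, hB⟩, by simp⟩⟩

theorem injective_coe_equiv {α : Type*} {P : Finset α} {t : ℕ} (e : Fin t ≃ P) :
    Injective (fun j => (e j : α)) :=
  Subtype.val_injective.comp e.injective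

theorem Fin.image_swap_zero_succ {t : ℕ} (i : Fin (t + 1)) :
    univ.image (fun k : Fin t => Equiv.swap 0 i k.succ) = univ.erase i := by
  ext j
  simp only [mem_image, mem_univ, true_and, mem_erase, and_true, Equiv.swap_apply_eq_iff]
  constructor
  · rintro ⟨k, hk⟩ rfl
    simp at hk
  · intro hj
    have h0 : Equiv.swap 0 i j ≠ 0 := by simpa [Equiv.swap_apply_eq_iff] using hj
    exact ⟨(Equiv.swap 0 i j).pred h0, Fin.succ_pred _ _⟩

theorem Fin.sum_Ici_eq_self_iff {t : ℕ} {v : Fin t → ℕ} (hv : ∀ j, 0 < v j) (j : Fin t) :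
    ∑ l ∈ Ici j, v l = v j ↔ (j : ℕ) = t - 1 := by
  rw [Ici_eq_cons_Ioi, Finset.sum_cons, add_eq_left, sum_eq_zero_iff]
  constructor
  · intro h
    by_contra hne
    have hj : (j : ℕ) + 1 < t := by omega
    exact (hv ⟨j + 1, hj⟩).ne' (h _ (mem_Ioi.mpr (Fin.lt_def.mpr (by simp))))
  · intro h l hl
    have := Fin.lt_def.mp (mem_Ioi.mp hl)
    omega

theorem Finpartition.parts_avoid_of_mem {α : Type*} [GeneralizedBooleanAlgebra α] [DecidableEq α]
    {a b : α} (P : Finpartition a) (hb : b ∈ P.parts) :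
    (P.avoid b).parts = P.parts.erase b := by
  ext c
  rw [Finpartition.mem_avoid, mem_erase]
  constructor
  · rintro ⟨d, hd, hdb, rfl⟩
    have hne : d ≠ b := fun h => hdb (h ▸ le_rfl)
    rw [(show Disjoint d b from P.disjoint hd hb hne).sdiff_eq_left]
    exact ⟨hne, hd⟩
  · rintro ⟨hcb, hc⟩
    have hdisj : Disjoint c b := P.disjoint hc hb hcb
    exact ⟨c, hc, fun h => P.ne_bot hc (hdisj.eq_bot_of_le h), hdisj.sdiff_eq_left⟩

theorem Finpartition.sum_filter_mem_parts_eq_sum_sdiff {ι M : Type*} [DecidableEq ι]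
    [AddCommMonoid M] {s B : Finset ι} (hB : B.Nonempty) (hBs : B ⊆ s) (g : Finset (Finset ι) → M) :
    ∑ P : Finpartition s with B ∈ P.parts, g (P.parts.erase B) =
      ∑ Q : Finpartition (s \ B), g Q.parts := by
  refine sum_nbij' (fun P => P.avoid B)
    (fun Q => Q.extend hB.ne_empty disjoint_sdiff_self_left (sdiff_sup_cancel hBs))
    (fun _ _ => mem_univ _) (fun Q _ => by simp) (fun P hP => ?_) (fun Q _ => ?_)
    (fun P hP => by rw [Finpartition.parts_avoid_of_mem _ (mem_filter.mp hP).2])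
  · ext1
    rw [Finpartition.extend_parts, Finpartition.parts_avoid_of_mem _ (mem_filter.mp hP).2,
      insert_erase (mem_filter.mp hP).2]
  · ext1
    rw [Finpartition.parts_avoid_of_mem _ (by simp), Finpartition.extend_parts, erase_insert]
    obtain ⟨x, hx⟩ := hB
    exact fun h => (mem_sdiff.mp (Q.le h hx)).2 hx

section OrderedBlocks

variable {ι : Type*} (w : ℕ → ℕ → ℝ)

def tailProd {t : ℕ} (v : Fin t → ℕ) : ℝ := ∏ j, w (v j) (∑ l ∈ Ici j, v l)

theorem tailProd_succ {t : ℕ} (v : Fin (t + 1) → ℕ) :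
    tailProd w v = w (v 0) (∑ l, v l) * tailProd w (fun j => v j.succ) := by
  rw [tailProd, Fin.prod_univ_succ, tailProd]
  congr 1
  · simp
  · exact prod_congr rfl fun j _ => by rw [Fin.sum_Ici_succ]

noncomputable def orderingSum {t : ℕ} (f : Fin t → Finset ι) : ℝ :=
  ∑ σ : Equiv.Perm (Fin t), tailProd w (fun j => #(f (σ j)))

theorem orderingSum_comp_perm {t : ℕ} (f : Fin t → Finset ι) (e : Equiv.Perm (Fin t)) :
    orderingSum w (f ∘ e) = orderingSum w f :=
  Equiv.sum_comp (Equiv.mulLeft e) (fun σ => tailProd w (fun j => #(f (σ j))))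

theorem orderingSum_congr [DecidableEq ι] {t t' : ℕ} {f : Fin t → Finset ι}
    {g : Fin t' → Finset ι} (hf : Injective f) (hg : Injective g)
    (h : univ.image f = univ.image g) :
    orderingSum w f = orderingSum w g := by
  obtain rfl : t = t' := by
    simpa [card_image_of_injective _ hf, card_image_of_injective _ hg] using congrArg card h
  have hfg : ∀ j, ∃ k, f k = g j := fun j => by
    simpa using (h ▸ mem_image_of_mem g (mem_univ j) : g j ∈ univ.image f)
  choose e he using hfg
  have he_inj : Injective e := fun a b hab => hg (by rw [← he a, ← he b, hab])
  rw [show g = f ∘ Equiv.ofBijective e he_inj.bijective_of_finite from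
    funext fun j => (he j).symm, orderingSum_comp_perm]

theorem orderingSum_succ {t : ℕ} (f : Fin (t + 1) → Finset ι) :
    orderingSum w f = ∑ i, w #(f i) (∑ j, #(f j)) *
      orderingSum w (fun k => f (Equiv.swap 0 i k.succ)) := by
  rw [orderingSum, ← Equiv.sum_comp Equiv.Perm.decomposeFin.symm, Fintype.sum_prod_type]
  refine sum_congr rfl fun i _ => ?_
  rw [orderingSum, mul_sum]
  refine sum_congr rfl fun σ _ => ?_
  rw [tailProd_succ, ← Equiv.sum_comp (Equiv.Perm.decomposeFin.symm (i, σ)) (fun j => #(f j))]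
  simp only [Equiv.Perm.decomposeFin_symm_apply_zero, Equiv.Perm.decomposeFin_symm_apply_succ]

noncomputable def partitionSum (P : Finset (Finset ι)) : ℝ :=
  orderingSum w (fun j => (P.equivFin.symm j : Finset ι))

theorem orderingSum_eq_partitionSum [DecidableEq ι] {t : ℕ} {f : Fin t → Finset ι}
    (hf : Injective f) :
    orderingSum w f = partitionSum w (univ.image f) :=
  orderingSum_congr w hf (injective_coe_equiv _) (image_univ_coe_equiv _).symm

theorem partitionSum_empty : partitionSum w (∅ : Finset (Finset ι)) = 1 := by
  have : IsEmpty (Fin #(∅ : Finset (Finset ι))) := by rw [card_empty]; infer_instance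
  rw [partitionSum, orderingSum, Fintype.sum_subsingleton _ 1, tailProd, Fintype.prod_empty]

theorem partitionSum_nonneg (hw : ∀ m g, 0 ≤ w m g) (P : Finset (Finset ι)) :
    0 ≤ partitionSum w P :=
  sum_nonneg fun _ _ => prod_nonneg fun _ _ => hw _ _

theorem partitionSum_eq_sum_erase [DecidableEq ι] {P : Finset (Finset ι)} (hP : P.Nonempty) :
    partitionSum w P = ∑ B ∈ P, w #B (∑ C ∈ P, #C) * partitionSum w (P.erase B) := by
  obtain ⟨t, ht⟩ : ∃ t, #P = t + 1 := Nat.exists_eq_succ_of_ne_zero hP.card_pos.ne'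
  let e : Fin (t + 1) ≃ P := (finCongr ht.symm).trans P.equivFin.symm
  let f : Fin (t + 1) → Finset ι := fun j => e j
  have hf : Injective f := injective_coe_equiv e
  have hfP : univ.image f = P := image_univ_coe_equiv e
  calc partitionSum w P = orderingSum w f := by
        rw [orderingSum_eq_partitionSum w hf, hfP]
    _ = ∑ i, w #(f i) (∑ j, #(f j)) * partitionSum w (P.erase (f i)) := by
        rw [orderingSum_succ]
        refine sum_congr rfl fun i _ => ?_
        rw [orderingSum_eq_partitionSum w (f := fun k => f (Equiv.swap 0 i k.succ))
          (hf.comp ((Equiv.swap 0 i).injective.comp (Fin.succ_injective t))),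
          ← hfP, ← image_erase hf, ← Fin.image_swap_zero_succ, image_image]
        rfl
    _ = _ := by
        rw [← hfP, sum_image hf.injOn, sum_image hf.injOn]

theorem sum_partitionSum_finpartition [DecidableEq ι] (f : ℕ → ℝ) (h0 : f 0 = 1)
    (hrec : ∀ N, f (N + 1) =
      ∑ m ∈ range (N + 1), ((N + 1).choose (m + 1) : ℝ) * w (m + 1) (N + 1) * f (N - m))
    (s : Finset ι) : ∑ P : Finpartition s, partitionSum w P.parts = f #s := by
  induction s using Finset.strongInduction with
  | H s ih =>
  rcases s.eq_empty_or_nonempty with rfl | hs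
  · have hP : ∀ P : Finpartition (∅ : Finset ι), P.parts = ∅ :=
      fun P => P.parts_eq_empty_iff.mpr rfl
    have : Subsingleton (Finpartition (∅ : Finset ι)) :=
      ⟨fun P Q => Finpartition.ext ((hP P).trans (hP Q).symm)⟩
    rw [Fintype.sum_subsingleton _ ⊥, hP, partitionSum_empty, card_empty, h0]
  obtain ⟨N, hN⟩ : ∃ N, #s = N + 1 := Nat.exists_eq_succ_of_ne_zero hs.card_pos.ne'
  let term : ℕ → ℝ := fun m => if m = 0 then 0 else w m #s * f (#s - m)
  calc ∑ P : Finpartition s, partitionSum w P.parts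
      = ∑ P : Finpartition s, ∑ B ∈ P.parts, w #B #s * partitionSum w (P.parts.erase B) := by
        refine sum_congr rfl fun P _ => ?_
        rw [partitionSum_eq_sum_erase w (P.parts_nonempty hs.ne_empty), P.sum_card_parts]
    -- a partition with a marked part `B` is a subset `B ⊆ s` with a partition having `B` as a part
    _ = ∑ B ∈ s.powerset, ∑ P : Finpartition s with B ∈ P.parts,
          w #B #s * partitionSum w (P.parts.erase B) :=
        sum_comm' fun P B => by simpa using fun hB => P.le hB
    _ = ∑ B ∈ s.powerset, term #B := by
        refine sum_congr rfl fun B hBs => ?_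
        rcases B.eq_empty_or_nonempty with rfl | hB
        · simp [term, filter_false_of_mem, Finpartition.empty_notMem_parts]
        rw [mem_powerset] at hBs
        rw [← mul_sum, Finpartition.sum_filter_mem_parts_eq_sum_sdiff hB hBs (partitionSum w),
          ih _ (sdiff_ssubset hBs hB), card_sdiff_of_subset hBs]
        simp [term, hB.card_pos.ne']
    _ = f #s := by
        rw [sum_powerset_apply_card, hN, sum_range_succ', hrec]
        simp [term, hN, nsmul_eq_mul, mul_assoc]

end OrderedBlocks

-- The weight of a block of size `m` when `g` points remain, this block included. For non-empty
-- blocks, `m = g` exactly for the last block, where `eppfZero` has its indicator `𝟙(j = t)`.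
noncomputable def qbWeight (α p : ℝ) (m g : ℕ) : ℝ :=
  α * m ! * (p + if m = g then (1 - p) / (α * betaFun α (m + 1)) else 0) / (g + α * (1 - p))

theorem qbWeight_eq {α p : ℝ} (hα : 0 < α) (m g : ℕ) :
    qbWeight α p m g = (α * p * m ! +
      if m = g then α * (1 - p) * (ascPochhammer ℝ m).eval (α + 1) else 0) / (g + α * (1 - p)) := by
  have hpos : 0 < (ascPochhammer ℝ m).eval (α + 1) := ascPochhammer_pos m _ (by linarith)
  rw [qbWeight, mul_betaFun_natCast_add_one hα]
  split_ifs
  · field_simp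
  · ring

theorem qbWeight_nonneg {α p : ℝ} (hα : 0 < α) (hp : p ∈ Set.Ioo (0 : ℝ) 1) (m g : ℕ) :
    0 ≤ qbWeight α p m g := by
  obtain ⟨hp0, hp1⟩ := hp
  have hpos : 0 < (ascPochhammer ℝ m).eval (α + 1) := ascPochhammer_pos m _ (by linarith)
  have h1p : 0 < 1 - p := sub_pos.mpr hp1
  rw [qbWeight_eq hα]
  split_ifs <;> positivity

theorem ascPochhammer_eval_succ_eq_sum_qbWeight {α p : ℝ} (hα : 0 < α)
    (hp : p ∈ Set.Ioo (0 : ℝ) 1) (N : ℕ) :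
    (ascPochhammer ℝ (N + 1)).eval α = ∑ m ∈ range (N + 1),
      ((N + 1).choose (m + 1) : ℝ) * qbWeight α p (m + 1) (N + 1) *
        (ascPochhammer ℝ (N - m)).eval α := by
  set R : ℕ → ℝ := fun k => (ascPochhammer ℝ k).eval α
  show R (N + 1) = _
  have hsum : ∑ m ∈ range (N + 1), ((N + 1).choose (m + 1) : ℝ) * (m + 1)! * R (N - m) =
      (ascPochhammer ℝ (N + 1)).eval (α + 1) - R (N + 1) := by
    rw [← sum_choose_mul_factorial_mul_ascPochhammer_eval,
      sum_range_succ' (fun k => ((N + 1).choose k : ℝ) * k ! * R (N + 1 - k))]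
    simp [R]
  set A := (ascPochhammer ℝ (N + 1)).eval (α + 1)
  set D : ℝ := (N + 1 : ℕ) + α * (1 - p)
  have hD : 0 < D := by
    have := sub_pos.mpr hp.2
    positivity
  have hterm : ∀ m ∈ range (N + 1),
      ((N + 1).choose (m + 1) : ℝ) * qbWeight α p (m + 1) (N + 1) * R (N - m) =
        α * p / D * (((N + 1).choose (m + 1) : ℝ) * (m + 1)! * R (N - m)) +
          if N = m then α * (1 - p) * A / D else 0 := by
    intro m _
    rw [qbWeight_eq hα]
    rcases eq_or_ne N m with rfl | h
    · simp [R, A, D]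
      ring
    · simp [h, Ne.symm h, D]
      ring
  have hA : α * A = R (N + 1) * (α + (N + 1 : ℕ)) := by
    rw [← ascPochhammer_succ_eval_eq_mul, ascPochhammer_succ_eval]
  rw [sum_congr rfl hterm, sum_add_distrib, ← mul_sum, hsum, sum_ite_eq (range (N + 1)) N,
    if_pos (self_mem_range_succ N), div_mul_eq_mul_div, ← add_div, eq_div_iff hD.ne']
  linear_combination -hA

theorem eppfZero_eq_sum_tailProd (α p : ℝ) (n t : ℕ) {ns : Fin t → ℕ} (hns : ∀ j, 0 < ns j) :
    eppfZero α p n t ns = Real.Gamma α / Real.Gamma (n + α) *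
      ∑ σ : Equiv.Perm (Fin t), tailProd (qbWeight α p) (fun j => ns (σ j)) := by
  rw [eppfZero, mul_sum, mul_sum]
  refine sum_congr rfl fun σ _ => ?_
  rw [show α ^ t * Real.Gamma α / Real.Gamma (n + α) * ∏ j, ((ns j)! : ℝ) =
    Real.Gamma α / Real.Gamma (n + α) * (α ^ t * ∏ j, ((ns j)! : ℝ)) by ring, mul_assoc]
  congr 1
  rw [tailProd, ← Fin.prod_const, ← Equiv.prod_comp σ (fun j => ((ns j)! : ℝ)),
    ← prod_mul_distrib, ← prod_mul_distrib]
  refine prod_congr rfl fun j _ => ?_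
  have hlast : ns (σ j) = ∑ l ∈ Ici j, ns (σ l) ↔ (j : ℕ) = t - 1 :=
    eq_comm.trans (Fin.sum_Ici_eq_self_iff (fun l => hns (σ l)) j)
  simp only [qbWeight, hlast]
  ring

theorem blockSize_pos {n : ℕ} (P : SetPartition n) (j : Fin P.1.card) : 0 < blockSize P j :=
  card_pos.mpr (nonempty_iff_ne_empty.mpr fun h =>
    P.2.1 (h ▸ ((Fintype.equivFinOfCardEq (Fintype.card_coe P.1)).symm j).2))

theorem PrZero_eq_mul_partitionSum (α p : ℝ) {n : ℕ} (P : SetPartition n) :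
    PrZero α p n P = Real.Gamma α / Real.Gamma (n + α) * partitionSum (qbWeight α p) P.1 := by
  rw [PrZero, eppfZero_eq_sum_tailProd α p n P.1.card (blockSize_pos P)]
  -- `blockEnum` and `Finset.equivFin` are the same enumeration of the blocks
  rfl

def SetPartition.equivFinpartition (n : ℕ) :
    SetPartition n ≃ Finpartition (univ : Finset (Fin n)) where
  toFun P := Finpartition.ofExistsUnique P.1 (fun _ _ => subset_univ _) (fun i _ => P.2.2 i) P.2.1
  invFun Q := ⟨Q.parts, Q.empty_notMem_parts, fun i => Q.existsUnique_mem (mem_univ i)⟩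
  left_inv _ := rfl
  right_inv _ := rfl

theorem stmt3_general (α p : ℝ) (hα : 0 < α) (hp : p ∈ Set.Ioo (0:ℝ) 1) (n : ℕ) :
    (∀ P : SetPartition n, 0 ≤ PrZero α p n P) ∧
      ∑ P : SetPartition n, PrZero α p n P = 1 := by
  simp_rw [PrZero_eq_mul_partitionSum]
  refine ⟨fun P => mul_nonneg (by positivity) (partitionSum_nonneg _ (qbWeight_nonneg hα hp) _), ?_⟩
  have hsum : ∑ P : SetPartition n, partitionSum (qbWeight α p) P.1 =
      (ascPochhammer ℝ n).eval α := by
    calc ∑ P : SetPartition n, partitionSum (qbWeight α p) P.1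
        = ∑ Q : Finpartition (univ : Finset (Fin n)), partitionSum (qbWeight α p) Q.parts :=
          Fintype.sum_equiv (SetPartition.equivFinpartition n) _ _ fun _ => rfl
      _ = _ := by
        rw [sum_partitionSum_finpartition _ (fun N => (ascPochhammer ℝ N).eval α) (by simp)
          (ascPochhammer_eval_succ_eq_sum_qbWeight hα hp), card_univ, Fintype.card_fin]
  rw [← mul_sum, hsum, Real.Gamma_natCast_add hα]
  field_simp [(ascPochhammer_pos n α hα).ne']

/-- For `α > 0` and `p ∈ (0,1)`, `Pr_{0,n}` is a probability mass function on the set of all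
set partitions of `{1,…,n}`. -/
theorem stmt3 (α p : ℝ) (hα : 0 < α) (hp : p ∈ Set.Ioo (0:ℝ) 1) (n : ℕ) (hn : 1 ≤ n) :
    (∀ P : SetPartition n, 0 ≤ PrZero α p n P) ∧
      ∑ P : SetPartition n, PrZero α p n P = 1 :=
  stmt3_general α p hα hp n
end

section
/- Let T be a nonempty finite type and let p, q : T → ℝ be nonnegative functions with Σ_{i∈T} p(i) = Σ_{i∈T} q(i) = 1 and q(i) > 0 for all i. Suppose c ≥ 0 satisfies p(i) ≤ (1+c) q(i) for all i∈T. Then the Kullback–Leibler divergence satisfies Σ_{i∈T} p(i) log(p(i)/q(i)) ≤ c (with the convention 0·log 0 = 0), and consequently, for every subset S ⊆ T, | Σ_{i∈S} p(i) − Σ_{i∈S} q(i) | ≤ sqrt(c/2). -/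
/-!
Since `p ≤ (1 + c) q`, every likelihood ratio `p i / q i` is at most `1 + c`, so the divergence is
at most `log (1 + c) ≤ c`. For the total variation bound Pinsker's inequality is not needed: the
ratio bound holds for `S` and for its complement, which pins `p(S) - q(S)` to
`[-c/(1+c), c/(1+c)]`, and `c/(1+c) ≤ √(c/2)` because `2c ≤ (1+c)²`.
-/

open Finset Real

lemma mul_log_div_le_mul_log {x y K : ℝ} (hx : 0 ≤ x) (hy : 0 < y) (hxy : x ≤ K * y) :
    x * log (x / y) ≤ x * log K := by
  rcases hx.eq_or_lt with rfl | hx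
  · simp
  refine mul_le_mul_of_nonneg_left (log_le_log (div_pos hx hy) ?_) hx.le
  rwa [div_le_iff₀ hy]

lemma sum_mul_log_div_le_of_le_mul {ι : Type*} (s : Finset ι) {p q : ι → ℝ} {K : ℝ}
    (hp : ∀ i ∈ s, 0 ≤ p i) (hq : ∀ i ∈ s, 0 < q i) (hpq : ∀ i ∈ s, p i ≤ K * q i) :
    ∑ i ∈ s, p i * log (p i / q i) ≤ (∑ i ∈ s, p i) * log K := by
  rw [sum_mul]
  exact sum_le_sum fun i hi => mul_log_div_le_mul_log (hp i hi) (hq i hi) (hpq i hi)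

lemma abs_sub_le_div_one_add {P Q c : ℝ} (hP0 : 0 ≤ P) (hP1 : P ≤ 1) (hc : 0 ≤ c)
    (hPQ : P ≤ (1 + c) * Q) (hPQc : 1 - P ≤ (1 + c) * (1 - Q)) :
    |P - Q| ≤ c / (1 + c) := by
  have hc1 : 0 < 1 + c := by linarith
  rw [abs_le, neg_le, le_div_iff₀ hc1, le_div_iff₀ hc1]
  constructor <;> nlinarith

lemma div_one_add_le_sqrt_half {c : ℝ} (hc : 0 ≤ c) : c / (1 + c) ≤ √(c / 2) := by
  rw [le_sqrt (by positivity) (by positivity), div_pow, div_le_div_iff₀ (by positivity) two_pos]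
  nlinarith

lemma sum_le_one_add_mul_sum {ι : Type*} (s : Finset ι) {p q : ι → ℝ} {c : ℝ}
    (hpq : ∀ i, p i ≤ (1 + c) * q i) : ∑ i ∈ s, p i ≤ (1 + c) * ∑ i ∈ s, q i := by
  rw [mul_sum]
  exact sum_le_sum fun i _ => hpq i

theorem stmt7_general {T : Type*} [Fintype T] (p q : T → ℝ)
    (hp0 : ∀ i, 0 ≤ p i) (hq0 : ∀ i, 0 < q i)
    (hp1 : ∑ i, p i = 1) (hq1 : ∑ i, q i = 1)
    (c : ℝ) (hc : 0 ≤ c) (hpq : ∀ i, p i ≤ (1 + c) * q i) :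
    (∑ i, p i * Real.log (p i / q i)) ≤ c ∧
      ∀ S : Finset T, |(∑ i ∈ S, p i) - ∑ i ∈ S, q i| ≤ Real.sqrt (c / 2) := by
  constructor
  · calc ∑ i, p i * log (p i / q i) ≤ (∑ i, p i) * log (1 + c) :=
          sum_mul_log_div_le_of_le_mul _ (fun i _ => hp0 i) (fun i _ => hq0 i) (fun i _ => hpq i)
      _ ≤ c := by simpa [hp1] using log_le_sub_one_of_pos (by linarith : 0 < 1 + c)
  · intro S
    classical
    have hS := sum_le_one_add_mul_sum S hpq
    have hSc := sum_le_one_add_mul_sum Sᶜ hpq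
    have hpc : ∑ i ∈ Sᶜ, p i = 1 - ∑ i ∈ S, p i := by rw [← hp1, ← sum_compl_add_sum S]; ring
    have hqc : ∑ i ∈ Sᶜ, q i = 1 - ∑ i ∈ S, q i := by rw [← hq1, ← sum_compl_add_sum S]; ring
    rw [hpc, hqc] at hSc
    have hP1 : ∑ i ∈ S, p i ≤ 1 := (sum_le_univ_sum_of_nonneg hp0).trans_eq hp1
    exact (abs_sub_le_div_one_add (sum_nonneg fun i _ => hp0 i) hP1 hc hS hSc).trans
      (div_one_add_le_sqrt_half hc)

/-- If `p, q` are probability mass functions on a nonempty finite type with `q > 0` and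
`p ≤ (1+c) q` pointwise (`c ≥ 0`), then the KL divergence `Σ p log(p/q)` is at most `c`
(with `0 log 0 = 0`), and by Pinsker's inequality the total variation distance is at most
`sqrt(c/2)`. -/
theorem stmt7 {T : Type*} [Fintype T] [Nonempty T] (p q : T → ℝ)
    (hp0 : ∀ i, 0 ≤ p i) (hq0 : ∀ i, 0 < q i)
    (hp1 : ∑ i, p i = 1) (hq1 : ∑ i, q i = 1)
    (c : ℝ) (hc : 0 ≤ c) (hpq : ∀ i, p i ≤ (1 + c) * q i) :
    (∑ i, p i * Real.log (p i / q i)) ≤ c ∧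
      ∀ S : Finset T, |(∑ i ∈ S, p i) - ∑ i ∈ S, q i| ≤ Real.sqrt (c / 2) :=
  stmt7_general p q hp0 hq0 hp1 hq1 c hc hpq
end

section
/- Let α>0, p∈(0,1), N≥0 an integer, and ε∈(0,1] with αNε < α+1. Then [ p + (1-p)/(α B(α, N+1)) ] / [ p + (1-p) I_ε(α, N+1)/ε^α ] ≤ 1 + αNε/(α+1-αNε). -/
open MeasureTheory

/-!
Bernoulli's inequality `(1 - x)^N ≥ 1 - N x` gives
`∫_0^ε x^(α-1) (1-x)^N dx ≥ ε^α/α - N ε^(α+1)/(α+1) = (ε^α/α) c` with `c = (α+1-αNε)/(α+1)`,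
so `I_ε(α,N+1)/ε^α ≥ c/(α B(α,N+1))`. Since `0 < c ≤ 1`, the denominator of the ratio is at least
`c` times its numerator, and `1/c = 1 + αNε/(α+1-αNε)`.
-/

section BetaIntegral

variable {α : ℝ} (N : ℕ)

theorem intervalIntegrable_rpow_sub_one_mul_one_sub_pow (hα : 0 < α) (a b : ℝ) :
    IntervalIntegrable (fun x : ℝ => x ^ (α - 1) * (1 - x) ^ N) volume a b :=
  (intervalIntegral.intervalIntegrable_rpow' (by linarith)).mul_continuousOn
    ((continuous_const.sub continuous_id).pow N).continuousOn

theorem integral_rpow_sub_one_mul_one_sub_rpow_natCast (a b : ℝ) :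
    ∫ x in a..b, x ^ (α - 1) * (1 - x) ^ ((N : ℝ) + 1 - 1)
      = ∫ x in a..b, x ^ (α - 1) * (1 - x) ^ N := by
  simp only [add_sub_cancel_right, Real.rpow_natCast]

theorem betaFun_natCast_add_one_pos_s9 (hα : 0 < α) : 0 < betaFun α ((N : ℝ) + 1) := by
  rw [betaFun, integral_rpow_sub_one_mul_one_sub_rpow_natCast]
  refine intervalIntegral.intervalIntegral_pos_of_pos_on
    (intervalIntegrable_rpow_sub_one_mul_one_sub_pow N hα 0 1) (fun x hx => ?_) one_pos
  exact mul_pos (Real.rpow_pos_of_pos hx.1 _) (pow_pos (by linarith [hx.2]) _)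

theorem integral_rpow_sub_one_sub_mul_rpow (hα : 0 < α) (ε : ℝ) :
    ∫ x in (0:ℝ)..ε, (x ^ (α - 1) - N * x ^ α) = ε ^ α / α - N * ε ^ (α + 1) / (α + 1) := by
  rw [intervalIntegral.integral_sub (intervalIntegral.intervalIntegrable_rpow' (by linarith))
      ((intervalIntegral.intervalIntegrable_rpow' (by linarith)).const_mul _),
    intervalIntegral.integral_const_mul, integral_rpow (Or.inl (by linarith)),
    integral_rpow (Or.inl (by linarith)), Real.zero_rpow (by linarith),
    Real.zero_rpow (by linarith), sub_add_cancel]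
  ring

theorem rpow_sub_one_sub_mul_rpow_le (hα : 0 < α) {x : ℝ} (hx₀ : 0 ≤ x) (hx₂ : x ≤ 2) :
    x ^ (α - 1) - N * x ^ α ≤ x ^ (α - 1) * (1 - x) ^ N := by
  rcases hx₀.eq_or_lt with rfl | hx₀
  · simp [Real.zero_rpow hα.ne']
  have hbernoulli : 1 + (N : ℝ) * (-x) ≤ (1 + -x) ^ N := one_add_mul_le_pow (by linarith) N
  have hsplit : x ^ α = x ^ (α - 1) * x := by
    rw [← Real.rpow_add_one hx₀.ne', sub_add_cancel]
  calc x ^ (α - 1) - N * x ^ α = x ^ (α - 1) * (1 + N * (-x)) := by rw [hsplit]; ring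
    _ ≤ x ^ (α - 1) * (1 + -x) ^ N :=
      mul_le_mul_of_nonneg_left hbernoulli (Real.rpow_nonneg hx₀.le _)
    _ = x ^ (α - 1) * (1 - x) ^ N := by rw [← sub_eq_add_neg]

theorem le_integral_rpow_sub_one_mul_one_sub_pow (hα : 0 < α) {ε : ℝ} (hε₀ : 0 ≤ ε)
    (hε₂ : ε ≤ 2) :
    ε ^ α / α - N * ε ^ (α + 1) / (α + 1) ≤ ∫ x in (0:ℝ)..ε, x ^ (α - 1) * (1 - x) ^ N := by
  rw [← integral_rpow_sub_one_sub_mul_rpow N hα]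
  exact intervalIntegral.integral_mono_on hε₀
    ((intervalIntegral.intervalIntegrable_rpow' (by linarith)).sub
      ((intervalIntegral.intervalIntegrable_rpow' (by linarith)).const_mul _))
    (intervalIntegrable_rpow_sub_one_mul_one_sub_pow N hα 0 ε)
    fun x hx => rpow_sub_one_sub_mul_rpow_le N hα hx.1 (hx.2.trans hε₂)

theorem le_incBeta_natCast_add_one_div_rpow (hα : 0 < α) {ε : ℝ} (hε₀ : 0 < ε) (hε₂ : ε ≤ 2) :
    (α + 1 - α * N * ε) / (α + 1) / (α * betaFun α ((N : ℝ) + 1))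
      ≤ incBeta ε α ((N : ℝ) + 1) / ε ^ α := by
  have hB := betaFun_natCast_add_one_pos_s9 N hα
  have hJ := le_integral_rpow_sub_one_mul_one_sub_pow N hα hε₀.le hε₂
  have hεα : 0 < ε ^ α := Real.rpow_pos_of_pos hε₀ α
  rw [Real.rpow_add_one hε₀.ne'] at hJ
  rw [incBeta, integral_rpow_sub_one_mul_one_sub_rpow_natCast]
  calc (α + 1 - α * N * ε) / (α + 1) / (α * betaFun α ((N : ℝ) + 1))
      = (ε ^ α / α - N * (ε ^ α * ε) / (α + 1)) / (betaFun α ((N : ℝ) + 1) * ε ^ α) := by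
        field_simp
    _ ≤ _ / (betaFun α ((N : ℝ) + 1) * ε ^ α) := by gcongr
    _ = _ := (div_div _ _ _).symm

end BetaIntegral

/-- Bound on the ratio of the last factors of the `ε = 0` and `ε > 0` EPPFs of the
quasi-Bernoulli stick-breaking process: for `α > 0`, `p ∈ (0,1)`, `N ≥ 0`, `ε ∈ (0,1]`
with `αNε < α+1`,
`[p + (1-p)/(α B(α,N+1))] / [p + (1-p) I_ε(α,N+1)/ε^α] ≤ 1 + αNε/(α+1-αNε)`. -/
theorem stmt9 (α p : ℝ) (hα : 0 < α) (hp : p ∈ Set.Ioo (0:ℝ) 1)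
    (N : ℕ) (ε : ℝ) (hε : ε ∈ Set.Ioc (0:ℝ) 1) (h : α * N * ε < α + 1) :
    (p + (1 - p) / (α * betaFun α ((N : ℝ) + 1))) /
        (p + (1 - p) * incBeta ε α ((N : ℝ) + 1) / ε ^ α)
      ≤ 1 + α * N * ε / (α + 1 - α * N * ε) := by
  have hI := le_incBeta_natCast_add_one_div_rpow N hα hε.1 (by linarith [hε.2])
  set c := (α + 1 - α * N * ε) / (α + 1)
  set q := (1 - p) / (α * betaFun α ((N : ℝ) + 1))
  have hq : 0 < q :=
    div_pos (by linarith [hp.2]) (mul_pos hα (betaFun_natCast_add_one_pos_s9 N hα))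
  have hpq : 0 < p + q := by linarith [hp.1]
  have hc : 0 < c := div_pos (by linarith) (by linarith)
  have hc₁ : c ≤ 1 := by
    have : 0 ≤ α * N * ε := mul_nonneg (mul_nonneg hα.le N.cast_nonneg) hε.1.le
    exact div_le_one_of_le₀ (by linarith) (by linarith)
  have hden : c * (p + q) ≤ p + (1 - p) * incBeta ε α ((N : ℝ) + 1) / ε ^ α := by
    have : c * q ≤ (1 - p) * (incBeta ε α ((N : ℝ) + 1) / ε ^ α) := by
      calc c * q = (1 - p) * (c / (α * betaFun α ((N : ℝ) + 1))) := by ring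
        _ ≤ _ := mul_le_mul_of_nonneg_left hI (by linarith [hp.2])
    have hcp : c * p ≤ p := mul_le_of_le_one_left hp.1.le hc₁
    rw [mul_div_assoc]
    linarith
  calc (p + q) / (p + (1 - p) * incBeta ε α ((N : ℝ) + 1) / ε ^ α)
      ≤ (p + q) / (c * (p + q)) := div_le_div_of_nonneg_left hpq.le (mul_pos hc hpq) hden
    _ = 1 + α * N * ε / (α + 1 - α * N * ε) := by
      have hs : α + 1 - α * N * ε ≠ 0 := by linarith
      rw [div_mul_cancel_right₀ hpq.ne', inv_div]
      field_simp
      ring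
end

section
/- Let α>0 and let r be a nonnegative integer with 0 < α−r ≤ 1. Then for all nonnegative integers G and N, Γ(G+N+α+1) / ( Γ(G+α+1) · N! ) ≤ (1 + N/(α−r))^{G+r+1}. -/
/-!
Write `β = α - r ∈ (0, 1]` and `s = G + r + 1`, so that `G + α + 1 = β + s`. Expanding `Γ` by its
functional equation from `Γ(β)` splits the ratio as
`∏_{m < N} (β + m) / N! · ∏_{m < s} (β + N + m) / (β + m)`.
Since `β ≤ 1`, the first product is at most `∏_{m < N} (m + 1) / N! = 1`, and each of the `s`
factors of the second is at most `(β + N) / β = 1 + N / β`.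
-/

open Finset Nat

lemma Real.Gamma_add_nat_eq_mul_prod {x : ℝ} (hx : 0 < x) (n : ℕ) :
    Real.Gamma (x + n) = Real.Gamma x * ∏ m ∈ range n, (x + m) := by
  induction n with
  | zero => simp
  | succ n ih =>
    rw [prod_range_succ, ← mul_assoc, ← ih, Nat.cast_succ, ← add_assoc,
      Real.Gamma_add_one (by positivity), mul_comm]

lemma prod_range_add_le_factorial {β : ℝ} (hβ0 : 0 ≤ β) (hβ1 : β ≤ 1) (N : ℕ) :
    ∏ m ∈ range N, (β + m) ≤ N ! := by
  rw [← prod_range_add_one_eq_factorial, Nat.cast_prod]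
  gcongr with m
  push_cast
  linarith

lemma prod_range_add_le_pow_mul_prod {β : ℝ} (hβ : 0 < β) (N s : ℕ) :
    ∏ m ∈ range s, (β + N + m) ≤ (1 + N / β) ^ s * ∏ m ∈ range s, (β + m) := by
  calc ∏ m ∈ range s, (β + N + m)
      ≤ ∏ m ∈ range s, ((1 + N / β) * (β + m)) := by
        gcongr with m
        have hexpand : (1 + N / β) * (β + m) = β + N + m + N / β * m := by
          field_simp
          ring
        rw [hexpand]
        have : 0 ≤ N / β * m := by positivity
        linarith
    _ = (1 + N / β) ^ s * ∏ m ∈ range s, (β + m) := by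
        rw [prod_mul_distrib, prod_const, card_range]

lemma Real.Gamma_add_add_div_le {β : ℝ} (hβ0 : 0 < β) (hβ1 : β ≤ 1) (s N : ℕ) :
    Real.Gamma (β + s + N) / (Real.Gamma (β + s) * N !) ≤ (1 + N / β) ^ s := by
  have hnum : Real.Gamma (β + s + N) =
      Real.Gamma β * (∏ m ∈ range N, (β + m)) * ∏ m ∈ range s, (β + N + m) := by
    rw [show β + s + N = β + ((N + s : ℕ) : ℝ) by push_cast; ring,
      Real.Gamma_add_nat_eq_mul_prod hβ0, prod_range_add, mul_assoc]
    simp only [Nat.cast_add, add_assoc]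
  rw [hnum, Real.Gamma_add_nat_eq_mul_prod hβ0, div_le_iff₀ (by positivity)]
  calc Real.Gamma β * (∏ m ∈ range N, (β + m)) * ∏ m ∈ range s, (β + N + m)
      ≤ Real.Gamma β * N ! * ((1 + N / β) ^ s * ∏ m ∈ range s, (β + m)) := by
        gcongr
        · exact prod_range_add_le_factorial hβ0.le hβ1 N
        · exact prod_range_add_le_pow_mul_prod hβ0 N s
    _ = (1 + N / β) ^ s * (Real.Gamma β * (∏ m ∈ range s, (β + m)) * N !) := by ring

/-- Gamma-ratio bound: if `r` is the nonnegative integer with `0 < α - r ≤ 1`, then for all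
nonnegative integers `G, N`, `Γ(G+N+α+1)/(Γ(G+α+1) N!) ≤ (1 + N/(α-r))^(G+r+1)`. -/
theorem stmt10 (α : ℝ) (r : ℕ) (hr1 : 0 < α - r) (hr2 : α - r ≤ 1) (G N : ℕ) :
    Real.Gamma ((G : ℝ) + N + α + 1) /
        (Real.Gamma ((G : ℝ) + α + 1) * (Nat.factorial N : ℝ))
      ≤ (1 + (N : ℝ) / (α - r)) ^ (G + r + 1) := by
  have hshift : (G : ℝ) + α + 1 = (α - r) + ((G + r + 1 : ℕ) : ℝ) := by push_cast; ring
  rw [show (G : ℝ) + N + α + 1 = (G + α + 1) + N by ring, hshift]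
  exact Real.Gamma_add_add_div_le hr1 hr2 (G + r + 1) N
end

section
/- Let α>0 and let r be a nonnegative integer with 0 < α−r ≤ 1. Then for all integers G ≥ 0, N ≥ 0 and all ε∈(0,1], (1/ε^α) · I_ε(G+α, N+1) ≤ ε^G · (1 + N/(α−r))^{G+r+1}, where I_ε(a,b)=(1/B(a,b))∫_0^ε x^{a-1}(1-x)^{b-1} dx is the regularized incomplete Beta function and B(a,b)=∫_0^1 x^{a-1}(1-x)^{b-1} dx. -/
open MeasureTheory

/-!
For `b = N + 1` the Beta function is `N! / (a (a+1) ⋯ (a+N))`, and bounding `(1 - x)^N` by `1`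
gives `∫_0^ε x^(a-1) (1-x)^N dx ≤ ε^a / a`; hence `I_ε(a, N+1) ≤ ε^a ∏_{j=1}^N (a + j) / j`.
For `a = G + α ≤ m = G + r + 1` the product is at most `C(N+m, m) ≤ (N+1)^m ≤ (1 + N/(α-r))^m`.
-/

open Finset Nat

lemma betaFun_natCast_add_one_s11 {a : ℝ} (ha : 0 < a) (N : ℕ) :
    betaFun a (N + 1) = N ! / ∏ j ∈ range (N + 1), (a + j) := by
  have hB : (betaFun a (N + 1) : ℂ) = Complex.betaIntegral a (N + 1) := by
    rw [Complex.betaIntegral, betaFun, ← intervalIntegral.integral_ofReal]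
    refine intervalIntegral.integral_congr fun x hx => ?_
    rw [Set.uIcc_of_le zero_le_one] at hx
    simp only [Complex.ofReal_mul, Complex.ofReal_cpow hx.1,
      Complex.ofReal_cpow (sub_nonneg.2 hx.2)]
    push_cast
    ring_nf
  rw [Complex.betaIntegral_eval_nat_add_one_right (by simpa using ha)] at hB
  exact_mod_cast hB

lemma integral_rpow_mul_one_sub_rpow_le {a b ε : ℝ} (ha : 0 < a) (hb : 1 ≤ b)
    (hε0 : 0 ≤ ε) (hε1 : ε ≤ 1) :
    ∫ x in (0:ℝ)..ε, x ^ (a - 1) * (1 - x) ^ (b - 1) ≤ ε ^ a / a := by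
  have hle : ∀ x ∈ Set.Icc 0 ε, x ^ (a - 1) * (1 - x) ^ (b - 1) ≤ x ^ (a - 1) := fun x hx =>
    mul_le_of_le_one_right (Real.rpow_nonneg hx.1 _)
      (Real.rpow_le_one (by linarith [hx.2]) (by linarith [hx.1]) (by linarith))
  have hg : IntervalIntegrable (fun x : ℝ => x ^ (a - 1)) volume 0 ε :=
    intervalIntegral.intervalIntegrable_rpow' (by linarith)
  have hf : IntervalIntegrable (fun x : ℝ => x ^ (a - 1) * (1 - x) ^ (b - 1)) volume 0 ε :=
    hg.mul_continuousOn ((Real.continuous_rpow_const (by linarith)).comp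
      (continuous_const.sub continuous_id)).continuousOn
  calc ∫ x in (0:ℝ)..ε, x ^ (a - 1) * (1 - x) ^ (b - 1)
      ≤ ∫ x in (0:ℝ)..ε, x ^ (a - 1) := intervalIntegral.integral_mono_on hε0 hf hg hle
    _ = ε ^ a / a := by
      rw [integral_rpow (Or.inl (by linarith)), sub_add_cancel, Real.zero_rpow ha.ne', sub_zero]

lemma prod_range_add_succ_le_factorial_mul_pow {a : ℝ} {m : ℕ} (ha : 0 ≤ a) (ham : a ≤ m)
    (N : ℕ) :
    ∏ j ∈ range N, (a + (j + 1)) ≤ N ! * ((N : ℝ) + 1) ^ m := by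
  have hasc : (m + 1).ascFactorial N ≤ N ! * (N + 1) ^ m := by
    rw [ascFactorial_eq_factorial_mul_choose, choose_symm_add.symm, add_comm m]
    exact Nat.mul_le_mul_left _ (choose_add_le_add_one_pow N m)
  calc ∏ j ∈ range N, (a + (j + 1))
      ≤ ∏ j ∈ range N, ((m + 1 + j : ℕ) : ℝ) :=
        prod_le_prod (fun j _ => by positivity) fun j _ => by push_cast; linarith
    _ = (m + 1).ascFactorial N := by rw [ascFactorial_eq_prod_range]; push_cast; rfl
    _ ≤ N ! * ((N : ℝ) + 1) ^ m := by exact_mod_cast hasc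

lemma incBeta_natCast_add_one_le {a ε : ℝ} {m : ℕ} (ha : 0 < a) (ham : a ≤ m)
    (hε0 : 0 ≤ ε) (hε1 : ε ≤ 1) (N : ℕ) :
    incBeta ε a (N + 1) ≤ ε ^ a * ((N : ℝ) + 1) ^ m := by
  set Q := ∏ j ∈ range N, (a + (j + 1))
  have hQ : 0 < Q := prod_pos fun j _ => by positivity
  have hprod : ∏ j ∈ range (N + 1), (a + j) = Q * a := by
    rw [prod_range_succ']; push_cast; rw [add_zero]
  have hint := integral_rpow_mul_one_sub_rpow_le ha (b := N + 1) (by simp) hε0 hε1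
  rw [incBeta, betaFun_natCast_add_one_s11 ha, hprod]
  calc _ ≤ ε ^ a / a / (N ! / (Q * a)) := by gcongr
    _ = ε ^ a * (Q / N !) := by field_simp
    _ ≤ ε ^ a * ((N : ℝ) + 1) ^ m := by
      gcongr
      rw [div_le_iff₀ (by positivity), mul_comm]
      exact prod_range_add_succ_le_factorial_mul_pow ha.le ham N

/-- Bound on the regularized incomplete Beta function controlling the `ε > 0` EPPF factors:
if `r` is the nonnegative integer with `0 < α - r ≤ 1`, then for all integers `G, N ≥ 0`
and `ε ∈ (0,1]`, `(1/ε^α) I_ε(G+α, N+1) ≤ ε^G (1 + N/(α-r))^(G+r+1)`. -/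
theorem stmt11 (α : ℝ) (r : ℕ) (hr1 : 0 < α - r) (hr2 : α - r ≤ 1)
    (G N : ℕ) (ε : ℝ) (hε : ε ∈ Set.Ioc (0:ℝ) 1) :
    incBeta ε ((G : ℝ) + α) ((N : ℝ) + 1) / ε ^ α ≤
      ε ^ G * (1 + (N : ℝ) / (α - r)) ^ (G + r + 1) := by
  obtain ⟨hε0, hε1⟩ := hε
  have hα : 0 < α := by linarith [r.cast_nonneg (α := ℝ)]
  have hN : (N : ℝ) ≤ N / (α - r) := le_div_self N.cast_nonneg hr1 hr2
  calc _ ≤ ε ^ ((G : ℝ) + α) * ((N : ℝ) + 1) ^ (G + r + 1) / ε ^ α := by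
        gcongr
        exact incBeta_natCast_add_one_le (by positivity) (by push_cast; linarith) hε0.le hε1 N
    _ = ε ^ G * ((N : ℝ) + 1) ^ (G + r + 1) := by
        rw [Real.rpow_add hε0, Real.rpow_natCast]
        field_simp
    _ ≤ ε ^ G * (1 + (N : ℝ) / (α - r)) ^ (G + r + 1) := by
        gcongr ε ^ G * ?_ ^ _
        linarith
end

section
/- Let I be a finite index set and x, y : I → ℝ nonnegative functions with Σ_{i∈I} x_i > 0 and Σ_{i∈I} y_i > 0. Then for every subset A ⊆ I, | (Σ_{i∈A} x_i)/(Σ_{i∈I} x_i) − (Σ_{i∈A} y_i)/(Σ_{i∈I} y_i) | ≤ ( Σ_{i'∈A} Σ_{i∈I∖A} | x_{i'} y_i − x_i y_{i'} | ) / ( (Σ_{i∈I} x_i)(Σ_{i∈I} y_i) ). -/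
open Finset

/-- Cross terms inside `A` cancel, leaving only the pairs with one index in `A` and one outside. -/
theorem sum_mul_sum_sub_sum_mul_sum_eq_sum_sum_compl {I R : Type*} [Fintype I] [DecidableEq I]
    [CommRing R] (x y : I → R) (A : Finset I) :
    (∑ i ∈ A, x i) * (∑ i, y i) - (∑ i, x i) * (∑ i ∈ A, y i) =
      ∑ i' ∈ A, ∑ i ∈ Aᶜ, (x i' * y i - x i * y i') := by
  rw [← sum_add_sum_compl A y, ← sum_add_sum_compl A x, sum_comm (t := Aᶜ)]
  simp only [sum_sub_distrib, ← sum_mul, ← mul_sum]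
  ring

theorem stmt13_general {I : Type*} [Fintype I] [DecidableEq I] (x y : I → ℝ)
    (hxs : 0 < ∑ i, x i) (hys : 0 < ∑ i, y i) (A : Finset I) :
    |(∑ i ∈ A, x i) / (∑ i, x i) - (∑ i ∈ A, y i) / (∑ i, y i)| ≤
      (∑ i' ∈ A, ∑ i ∈ Aᶜ, |x i' * y i - x i * y i'|) /
        ((∑ i, x i) * (∑ i, y i)) := by
  have hpos := mul_pos hxs hys
  rw [div_sub_div _ _ hxs.ne' hys.ne', abs_div, abs_of_pos hpos,
    div_le_div_iff_of_pos_right hpos, sum_mul_sum_sub_sum_mul_sum_eq_sum_sum_compl]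
  exact (abs_sum_le_sum_abs _ _).trans (sum_le_sum fun i' _ => abs_sum_le_sum_abs _ _)

/-- Difference of normalized probabilities bound: for nonnegative `x, y` on a finite index
set with positive total mass, and any subset `A`,
`|Σ_A x/Σ_I x - Σ_A y/Σ_I y| ≤ (Σ_{i'∈A} Σ_{i∈Aᶜ} |x_{i'} y_i - x_i y_{i'}|)/((Σ_I x)(Σ_I y))`. -/
theorem stmt13 {I : Type*} [Fintype I] [DecidableEq I] (x y : I → ℝ)
    (hx : ∀ i, 0 ≤ x i) (hy : ∀ i, 0 ≤ y i)
    (hxs : 0 < ∑ i, x i) (hys : 0 < ∑ i, y i) (A : Finset I) :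
    |(∑ i ∈ A, x i) / (∑ i, x i) - (∑ i ∈ A, y i) / (∑ i, y i)| ≤
      (∑ i' ∈ A, ∑ i ∈ Aᶜ, |x i' * y i - x i * y i'|) /
        ((∑ i, x i) * (∑ i, y i)) :=
  stmt13_general x y hxs hys A
end

section
/- Let n ≥ 2 be an integer, α > 0, and y : {1,…,n} → ℝ. Then (α √(n+1) / (2 (n−1)!)) · Σ_S (|S|−1)! (n−|S|−1)! · (1/(√(|S|+1)√(n−|S|+1))) · exp( (Σ_{i∈S} y_i)²/(2(|S|+1)) + (Σ_{i∉S} y_i)²/(2(n−|S|+1)) − (Σ_{i=1}^n y_i)²/(2(n+1)) ) ≤ (α √(n+1)/2) · exp( (Σ_{i=1}^n y_i²)/2 ) · ( log(n−1) + 1 ), where the sum ranges over all subsets S of {1,…,n} with ∅ ⊊ S ⊊ {1,…,n}. -/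
/-!
Each exponent is at most `½ ∑ yᵢ²` by Cauchy–Schwarz, `(∑_{i∈S} yᵢ)² ≤ |S| ∑_{i∈S} yᵢ²`, and each
square-root factor is at most `½` because `|S| + 1` and `n - |S| + 1` are both at least `2`.
What remains is the total Chinese-restaurant weight, which grouped by `k = |S|` is
`∑ₖ C(n,k) (k-1)! (n-k-1)! = (n-1)! ∑ₖ (1/k + 1/(n-k)) = 2 (n-1)! H_{n-1}`,
and `H_{n-1} ≤ log (n-1) + 1`.
-/

open Finset Real
open scoped Nat

theorem sq_sum_div_card_add_one_le {ι : Type*} (s : Finset ι) (y : ι → ℝ) :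
    (∑ i ∈ s, y i) ^ 2 / (#s + 1) ≤ ∑ i ∈ s, y i ^ 2 := by
  rw [div_le_iff₀ (by positivity)]
  have hcs : (∑ i ∈ s, y i) ^ 2 ≤ #s * ∑ i ∈ s, y i ^ 2 := sq_sum_le_card_mul_sum_sq
  have : 0 ≤ ∑ i ∈ s, y i ^ 2 := by positivity
  nlinarith

theorem split_exponent_le_sum_sq_div_two {n : ℕ} (S : Finset (Fin n)) (y : Fin n → ℝ) :
    (∑ i ∈ S, y i) ^ 2 / (2 * ((#S : ℝ) + 1)) +
        (∑ i ∈ Sᶜ, y i) ^ 2 / (2 * ((n : ℝ) - #S + 1)) -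
        (∑ i, y i) ^ 2 / (2 * ((n : ℝ) + 1)) ≤ (∑ i, y i ^ 2) / 2 := by
  have hcard : (n : ℝ) - #S = #Sᶜ := by
    rw [card_compl, Fintype.card_fin,
      Nat.cast_sub ((card_le_univ S).trans_eq (Fintype.card_fin n))]
  have hS := sq_sum_div_card_add_one_le S y
  have hSc := sq_sum_div_card_add_one_le Sᶜ y
  have htotal : 0 ≤ (∑ i, y i) ^ 2 / (2 * ((n : ℝ) + 1)) := by positivity
  rw [hcard, ← sum_add_sum_compl S (fun i => y i ^ 2)]
  simp only [div_mul_eq_div_div_swap] at htotal ⊢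
  linarith

theorem two_le_sqrt_add_one_mul_sqrt_sub_add_one {n k : ℕ} (hk : 1 ≤ k) (hkn : k < n) :
    2 ≤ √((k : ℝ) + 1) * √((n : ℝ) - k + 1) := by
  have hk' : (2 : ℝ) ≤ k + 1 := by exact_mod_cast Nat.succ_le_succ hk
  have hkn' : (2 : ℝ) ≤ n - k + 1 := by
    have : (k : ℝ) + 1 ≤ n := by exact_mod_cast hkn
    linarith
  calc (2 : ℝ) = √2 * √2 := (mul_self_sqrt two_pos.le).symm
    _ ≤ _ := by gcongr

theorem card_mem_Ico_one_card_iff {α : Type*} [Fintype α] (S : Finset α) :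
    #S ∈ Ico 1 (Fintype.card α) ↔ S ≠ ∅ ∧ S ≠ univ := by
  rw [mem_Ico, Nat.one_le_iff_ne_zero, Finset.card_ne_zero, nonempty_iff_ne_empty,
    card_lt_iff_ne_univ]

theorem sum_filter_ne_empty_ne_univ_apply_card {α M : Type*} [Fintype α] [DecidableEq α]
    [AddCommMonoid M] (f : ℕ → M) :
    ∑ S ∈ univ.filter (fun S : Finset α => S ≠ ∅ ∧ S ≠ univ), f #S =
      ∑ k ∈ Ico 1 (Fintype.card α), (Fintype.card α).choose k • f k := by
  simp_rw [← card_mem_Ico_one_card_iff]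
  rw [sum_filter, ← powerset_univ,
    sum_powerset_apply_card (fun k => if k ∈ Ico 1 (Fintype.card α) then f k else 0)]
  simp_rw [smul_ite, smul_zero]
  rw [← sum_filter, card_univ]
  congr 1
  ext k
  simp only [mem_filter, mem_range, mem_Ico]
  omega

theorem choose_mul_factorial_pred_mul_factorial_pred {n k : ℕ} (hk : 1 ≤ k) (hkn : k < n) :
    (n.choose k : ℝ) * ((k - 1)! * (n - k - 1)!) =
      (n - 1)! * ((k : ℝ)⁻¹ + ((n - k : ℕ) : ℝ)⁻¹) := by
  have hchoose := Nat.choose_mul_factorial_mul_factorial hkn.le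
  rw [← Nat.mul_factorial_pred (by omega : k ≠ 0), ← Nat.mul_factorial_pred (by omega : n - k ≠ 0),
    ← Nat.mul_factorial_pred (by omega : n ≠ 0)] at hchoose
  have hchooseR : (n.choose k : ℝ) * (k * (k - 1)!) * ((n - k : ℕ) * (n - k - 1)!) =
      n * (n - 1)! := by exact_mod_cast hchoose
  have hk0 : (k : ℝ) ≠ 0 := by positivity
  have hnk0 : ((n - k : ℕ) : ℝ) ≠ 0 := Nat.cast_ne_zero.mpr (by omega)
  field_simp
  rw [Nat.cast_sub hkn.le] at *
  linear_combination hchooseR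

theorem sum_Ico_choose_mul_factorial_pred_mul_factorial_pred (n : ℕ) :
    ∑ k ∈ Ico 1 n, (n.choose k : ℝ) * ((k - 1)! * (n - k - 1)!) =
      2 * (n - 1)! * ∑ k ∈ Ico 1 n, (k : ℝ)⁻¹ := by
  have hreflect : ∑ k ∈ Ico 1 n, ((n - k : ℕ) : ℝ)⁻¹ = ∑ k ∈ Ico 1 n, (k : ℝ)⁻¹ := by
    simpa using sum_Ico_reflect (fun k : ℕ => (k : ℝ)⁻¹) 1 n.le_succ
  rw [sum_congr rfl fun k hk =>
      choose_mul_factorial_pred_mul_factorial_pred (mem_Ico.1 hk).1 (mem_Ico.1 hk).2,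
    ← mul_sum, sum_add_distrib, hreflect]
  ring

theorem sum_Ico_one_inv_le_log_sub_one_add_one (n : ℕ) :
    ∑ k ∈ Ico 1 n, (k : ℝ)⁻¹ ≤ log (n - 1) + 1 := by
  rcases n with _ | m
  · simp
  · have := harmonic_le_one_add_log m
    rw [harmonic_eq_sum_Icc] at this
    push_cast at this ⊢
    rw [Ico_add_one_right_eq_Icc, add_sub_cancel_right]
    linarith

theorem stmt18_general (n : ℕ) (α : ℝ) (hα : 0 < α) (y : Fin n → ℝ) :
    α * Real.sqrt ((n : ℝ) + 1) / (2 * (Nat.factorial (n - 1) : ℝ)) *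
        ∑ S ∈ (Finset.univ : Finset (Finset (Fin n))).filter
            (fun S => S ≠ ∅ ∧ S ≠ Finset.univ),
          (Nat.factorial (S.card - 1) : ℝ) * (Nat.factorial (n - S.card - 1) : ℝ) *
            (1 / (Real.sqrt ((S.card : ℝ) + 1) * Real.sqrt ((n : ℝ) - S.card + 1))) *
            Real.exp ((∑ i ∈ S, y i) ^ 2 / (2 * ((S.card : ℝ) + 1)) +
              (∑ i ∈ Sᶜ, y i) ^ 2 / (2 * ((n : ℝ) - S.card + 1)) -
              (∑ i, y i) ^ 2 / (2 * ((n : ℝ) + 1)))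
      ≤ α * Real.sqrt ((n : ℝ) + 1) / 2 * Real.exp ((∑ i, y i ^ 2) / 2) *
          (Real.log ((n : ℝ) - 1) + 1) := by
  set F := (univ : Finset (Finset (Fin n))).filter (fun S => S ≠ ∅ ∧ S ≠ univ)
  set C := (∑ i, y i ^ 2) / 2
  have hweights : ∑ S ∈ F, ((#S - 1)! * (n - #S - 1)! : ℝ) =
      2 * (n - 1)! * ∑ k ∈ Ico 1 n, (k : ℝ)⁻¹ := by
    rw [sum_filter_ne_empty_ne_univ_apply_card (fun k => ((k - 1)! * (n - k - 1)! : ℝ))]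
    simpa [nsmul_eq_mul] using sum_Ico_choose_mul_factorial_pred_mul_factorial_pred n
  calc _ ≤ α * √((n : ℝ) + 1) / (2 * (n - 1)!) *
        ∑ S ∈ F, ((#S - 1)! * (n - #S - 1)! : ℝ) * (1 / 2) * exp C := by
        gcongr with S hS
        · have hcard : #S ∈ Ico 1 n := by
            simpa using (card_mem_Ico_one_card_iff S).2 (mem_filter.1 hS).2
          exact two_le_sqrt_add_one_mul_sqrt_sub_add_one (mem_Ico.1 hcard).1 (mem_Ico.1 hcard).2
        · exact split_exponent_le_sum_sq_div_two S y
    _ = α * √((n : ℝ) + 1) / 2 * exp C * ∑ k ∈ Ico 1 n, (k : ℝ)⁻¹ := by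
        rw [← sum_mul, ← sum_mul, hweights]
        field_simp
    _ ≤ _ := by
        gcongr
        exact sum_Ico_one_inv_le_log_sub_one_add_one n

/-- The central computation in the inconsistency proof for the Dirichlet process mixture
with vanishing concentration: the ratio `p(y, T=2)/p(y, T=1)` of marginal likelihoods
(written as a sum over proper nonempty subsets `S` of `{1,…,n}`, each unordered two-block
partition counted twice) is bounded by
`(α√(n+1)/2) exp((Σ y_i²)/2)(log(n-1)+1)`. -/
theorem stmt18 (n : ℕ) (hn : 2 ≤ n) (α : ℝ) (hα : 0 < α) (y : Fin n → ℝ) :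
    α * Real.sqrt ((n : ℝ) + 1) / (2 * (Nat.factorial (n - 1) : ℝ)) *
        ∑ S ∈ (Finset.univ : Finset (Finset (Fin n))).filter
            (fun S => S ≠ ∅ ∧ S ≠ Finset.univ),
          (Nat.factorial (S.card - 1) : ℝ) * (Nat.factorial (n - S.card - 1) : ℝ) *
            (1 / (Real.sqrt ((S.card : ℝ) + 1) * Real.sqrt ((n : ℝ) - S.card + 1))) *
            Real.exp ((∑ i ∈ S, y i) ^ 2 / (2 * ((S.card : ℝ) + 1)) +
              (∑ i ∈ Sᶜ, y i) ^ 2 / (2 * ((n : ℝ) - S.card + 1)) -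
              (∑ i, y i) ^ 2 / (2 * ((n : ℝ) + 1)))
      ≤ α * Real.sqrt ((n : ℝ) + 1) / 2 * Real.exp ((∑ i, y i ^ 2) / 2) *
          (Real.log ((n : ℝ) - 1) + 1) :=
  stmt18_general n α hα y
end
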